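/- arXiv:2507.11357 — 4 statements merged into one kernel-verified Lean document; each statement's English description precedes it below -/
import Mathlib

section
/- Let k ≥ 1, C = {0,1}^k, let Y be a type, β : C → Y a program, and S ⊆ C. Let A = {α_1, …, α_m} be a finite set of concept remappings, i.e., functions α : C → C with β(α(g)) = β(g) for every g ∈ S. Suppose there exist weights π ∈ [0,1]^m with Σ_i π_i = 1 and 0 < π_i < 1 for every i, such that for every g ∈ S the RS-mixture p_{A,π}(· | g), defined by p_{A,π}(w|g) = Σ_{i=1}^m π_i · 1[w = α_i(g)], is a product Bernoulli distribution on C. Then for every g ∈ S, the confusion set V_g = {α_i(g) : 1 ≤ i ≤ m} equals the cover of some implicant of the constraint φ_{β(g)} : C → {0,1} defined by φ_{β(g)}(w) = 1[β(w) = β(g)]. -/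
/-- Product Bernoulli distribution on `{0,1}^k` with mean vector `μ`. -/
def bern {k : ℕ} (μ : Fin k → ℝ) (w : Fin k → Bool) : ℝ :=
  ∏ i, if w i then μ i else 1 - μ i

/-- A distribution on `{0,1}^k` is a product Bernoulli distribution. -/
def IsProdBern {k : ℕ} (p : (Fin k → Bool) → ℝ) : Prop :=
  ∃ μ : Fin k → ℝ, (∀ i, 0 ≤ μ i ∧ μ i ≤ 1) ∧ ∀ w, p w = bern μ w

/-- The cover of an incomplete concept `(D, σ)`: all concepts agreeing with `σ` on `D`. -/
def cover {k : ℕ} (D : Finset (Fin k)) (σ : Fin k → Bool) : Set (Fin k → Bool) :=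
  {w | ∀ i ∈ D, w i = σ i}

/-- An incomplete concept `(D, σ)` is an implicant of the constraint `φ`. -/
def IsImplicant {k : ℕ} (φ : (Fin k → Bool) → Prop)
    (D : Finset (Fin k)) (σ : Fin k → Bool) : Prop :=
  ∀ w ∈ cover D σ, φ w

/-- Theorem 1: if the UCI model class is weakly RS-aware over a set of concept
remappings `A = {α_1, …, α_m}` (witnessed by strictly-interior weights `π` making
every RS-mixture a product Bernoulli distribution), then for every ground-truth
world `g` in the support, the confusion set `V_g = {α_i(g)}` equals the cover of
an implicant of the constraint `φ_{β(g)}`. -/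
theorem confusion_set_is_implicant_cover
    {k m : ℕ} (hk : 1 ≤ k) {Y : Type*} (β : (Fin k → Bool) → Y)
    (S : Set (Fin k → Bool)) (α : Fin m → (Fin k → Bool) → (Fin k → Bool))
    (hremap : ∀ i, ∀ g ∈ S, β (α i g) = β g)
    (π : Fin m → ℝ) (hπ : ∀ i, 0 < π i ∧ π i < 1) (hsum : ∑ i, π i = 1)
    (hmix : ∀ g ∈ S,
      IsProdBern (fun w => ∑ i, π i * (if w = α i g then (1 : ℝ) else 0))) :
    ∀ g ∈ S, ∃ (D : Finset (Fin k)) (σ : Fin k → Bool),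
      IsImplicant (fun w => β w = β g) D σ ∧
      {w | ∃ i, α i g = w} = cover D σ := by
  classical
  intro g hg
  obtain ⟨μ, hμ, hp⟩ := hmix g hg
  set D : Finset (Fin k) := Finset.univ.filter (fun i => μ i = 0 ∨ μ i = 1) with hD
  set σ : Fin k → Bool := fun i => decide (μ i = 1) with hσ
  have key : ∀ w, (∃ i, α i g = w) ↔ w ∈ cover D σ := by
    intro w
    have h1 : (∃ i, α i g = w) ↔ 0 < ∑ i, π i * (if w = α i g then (1 : ℝ) else 0) := by
      constructor
      · rintro ⟨i, rfl⟩
        apply Finset.sum_pos'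
        · intro j _
          rcases hπ j with ⟨h0, _⟩
          split_ifs with h
          · linarith
          · simp
        · exact ⟨i, Finset.mem_univ i, by simpa using (hπ i).1⟩
      · intro hpos
        by_contra hne
        push_neg at hne
        have hz : ∑ i, π i * (if w = α i g then (1 : ℝ) else 0) = 0 := by
          apply Finset.sum_eq_zero
          intro j _
          rw [if_neg (fun h => hne j h.symm), mul_zero]
        linarith
    have h2 : (0 < bern μ w) ↔ w ∈ cover D σ := by
      constructor
      · intro hpos i hiD
        have hiD' : μ i = 0 ∨ μ i = 1 := by
          simpa [hD] using hiD
        have hfac : (if w i then μ i else 1 - μ i) ≠ 0 := by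
          intro h0
          have : bern μ w = 0 := Finset.prod_eq_zero (Finset.mem_univ i) h0
          rw [this] at hpos
          exact lt_irrefl 0 hpos
        rcases hiD' with h0 | h1
        · have h1' : μ i ≠ 1 := by rw [h0]; norm_num
          have : ¬ w i := by
            intro hw
            apply hfac
            rw [if_pos hw, h0]
          simp [hσ, h1', Bool.eq_false_iff.mpr]
          exact Bool.eq_false_iff.mpr (by simpa using this) ▸ (by simpa using this)
        · have hw : w i := by
            by_contra hw
            apply hfac
            rw [if_neg hw, h1]
            ring
          simp [hσ, h1, hw]
      · intro hw
        apply Finset.prod_pos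
        intro i _
        by_cases hiD : i ∈ D
        · have hiD' : μ i = 0 ∨ μ i = 1 := by simpa [hD] using hiD
          have hwi := hw i hiD
          rcases hiD' with h0 | h1
          · have h1' : μ i ≠ 1 := by rw [h0]; norm_num
            have : σ i = false := by simp [hσ, h1']
            rw [hwi, this]
            simp [h0]
          · have : σ i = true := by simp [hσ, h1]
            rw [hwi, this]
            simp [h1]
        · have hiD' : ¬ (μ i = 0 ∨ μ i = 1) := by simpa [hD] using hiD
          push_neg at hiD'
          rcases hμ i with ⟨hl, hr⟩
          have hl' : 0 < μ i := lt_of_le_of_ne hl (Ne.symm hiD'.1)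
          have hr' : μ i < 1 := lt_of_le_of_ne hr hiD'.2
          split_ifs
          · exact hl'
          · linarith
    rw [h1]
    have := hp w
    simp only [] at this
    rw [this]
    exact h2
  refine ⟨D, σ, ?_, ?_⟩
  · intro w hw
    obtain ⟨i, rfl⟩ := (key w).mpr hw
    exact hremap i g hg
  · ext w
    exact key w
end

section
/- Let k ≥ 1, let φ : {0,1}^k → {0,1} be a constraint, and let p be a product Bernoulli distribution on C = {0,1}^k with mean vector μ ∈ [0,1]^k such that every w ∈ C with p(w) > 0 satisfies φ(w) = 1. Then the support {w : p(w) > 0} equals the cover of an implicant of φ. -/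
/-- (Theorem 4.3 of van Krieken et al. 2024.) If every concept in the support of a
product Bernoulli distribution satisfies the constraint `φ`, then the support
equals the cover of an implicant of `φ`. -/
theorem support_bern_eq_implicant_cover {k : ℕ} (hk : 1 ≤ k)
    (φ : (Fin k → Bool) → Bool)
    (μ : Fin k → ℝ) (hμ : ∀ i, 0 ≤ μ i ∧ μ i ≤ 1)
    (hsupp : ∀ w, 0 < bern μ w → φ w = true) :
    ∃ (D : Finset (Fin k)) (σ : Fin k → Bool),
      IsImplicant (fun w => φ w = true) D σ ∧
      {w | 0 < bern μ w} = cover D σ := by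
  classical
  set D : Finset (Fin k) := Finset.univ.filter (fun i => μ i = 0 ∨ μ i = 1) with hD
  set σ : Fin k → Bool := fun i => decide (μ i = 1) with hσ
  -- key: support characterization
  have key : ∀ w, 0 < bern μ w ↔ w ∈ cover D σ := by
    intro w
    constructor
    · intro hw i hi
      simp only [hD, Finset.mem_filter, Finset.mem_univ, true_and] at hi
      by_contra hne
      have hzero : (if w i then μ i else 1 - μ i) = 0 := by
        rcases hi with h0 | h1
        · cases hwi : w i
          · simp [hσ, hwi, h0] at hne
          · simp [hwi, h0]
        · cases hwi : w i
          · simp [hwi, h1]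
          · simp [hσ, hwi, h1] at hne
      have : bern μ w = 0 := by
        unfold bern
        exact Finset.prod_eq_zero (Finset.mem_univ i) hzero
      rw [this] at hw; exact lt_irrefl 0 hw
    · intro hw
      unfold bern
      apply Finset.prod_pos
      intro i _
      rcases lt_or_eq_of_le (hμ i).1 with h0 | h0
      · rcases lt_or_eq_of_le (hμ i).2 with h1 | h1
        · cases hwi : w i <;> simp [hwi] <;> linarith
        · have hi : i ∈ D := by simp [hD, h1]
          have := hw i hi
          have : w i = true := by rw [this]; simp [hσ, h1]
          simp [this, h1]
      · have hi : i ∈ D := by simp [hD, ← h0]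
        have hwi := hw i hi
        have : w i = false := by rw [hwi]; simp [hσ]; intro h; rw [h] at h0; norm_num at h0
        simp [this, ← h0]
  refine ⟨D, σ, ?_, ?_⟩
  · intro w hw
    exact hsupp w ((key w).2 hw)
  · ext w; exact key w
end

section
/- Let C = {0,1}^2, let β : C → {0,1} be β(c_1, c_2) = c_1 XOR c_2, let S = C, and let A = {α_1, α_2} where α_1 is the identity and α_2(c_1, c_2) = (1−c_1, 1−c_2). Then α_1 and α_2 are concept remappings (β(α_i(g)) = β(g) for all g ∈ S), and for every π with 0 < π < 1 and every g ∈ S, the RS-mixture p(w) = π · 1[w = g] + (1−π) · 1[w = α_2(g)] is not a product Bernoulli distribution. Hence the UCI model class is not weakly reasoning-shortcut aware over A. -/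
/-- XOR MNIST: with program `β(c₁, c₂) = c₁ XOR c₂`, support `S = C`, and
remappings `α₁ = id` and `α₂` the bit-flip map, both are concept remappings, yet
no nondegenerate RS-mixture of them at any `g` is a product Bernoulli
distribution. Hence the UCI model class is not weakly RS-aware over `{α₁, α₂}`. -/
theorem xor_mnist_not_weakly_rs_aware :
    (∀ g : Fin 2 → Bool, xor (id g 0) (id g 1) = xor (g 0) (g 1)) ∧
    (∀ g : Fin 2 → Bool, xor (!(g 0)) (!(g 1)) = xor (g 0) (g 1)) ∧
    (∀ π : ℝ, 0 < π → π < 1 → ∀ g : Fin 2 → Bool,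
      ¬ IsProdBern (fun w =>
        π * (if w = g then (1 : ℝ) else 0) +
        (1 - π) * (if w = (fun i => !(g i)) then (1 : ℝ) else 0))) := by
  refine ⟨fun g => rfl, fun g => by cases g 0 <;> cases g 1 <;> rfl, ?_⟩
  rintro π hπ0 hπ1 g ⟨μ, hbd, h⟩
  -- the three evaluation points
  set w2 : Fin 2 → Bool := fun i => !(g i) with hw2
  set w3 : Fin 2 → Bool := ![g 0, !(g 1)] with hw3
  have hgne : g ≠ w2 := by
    intro he
    have := congrFun he 0
    simp [hw2] at this
  have hw3g : w3 ≠ g := by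
    intro he
    have := congrFun he 1
    simp [hw3] at this
  have hw3w2 : w3 ≠ w2 := by
    intro he
    have := congrFun he 0
    simp [hw3, hw2] at this
  set a : ℝ := if g 0 then μ 0 else 1 - μ 0 with ha
  set b : ℝ := if g 1 then μ 1 else 1 - μ 1 with hb
  set a' : ℝ := if !(g 0) then μ 0 else 1 - μ 0 with ha'
  set b' : ℝ := if !(g 1) then μ 1 else 1 - μ 1 with hb'
  have e1 : π = a * b := by
    have := h g
    simpa [hgne, bern, Fin.prod_univ_two, ha, hb] using this
  have e2 : 1 - π = a' * b' := by
    have := h w2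
    simpa [hgne.symm, (show (fun i => !(g i)) ≠ g from fun h => hgne h.symm), bern, Fin.prod_univ_two, hw2, ha', hb'] using this
  have e3 : (0 : ℝ) = a * b' := by
    have := h w3
    simp [hw3g, hw3w2, (show ![g 0, !(g 1)] ≠ g from hw3g), (show ![g 0, !(g 1)] ≠ w2 from hw3w2), (show ![g 0, !(g 1)] ≠ (fun i => !(g i)) from hw3w2), bern, Fin.prod_univ_two, hw3] at this
    rw [ha, hb']
    refine this.trans ?_
    by_cases h0 : g 0 <;> by_cases h1 : g 1 <;> simp [h0, h1]
  have hane : a ≠ 0 := by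
    intro h0
    rw [h0, zero_mul] at e1
    exact absurd e1 (ne_of_gt hπ0)
  have hb'0 : b' = 0 := by
    rcases mul_eq_zero.mp e3.symm with h0 | h0
    · exact absurd h0 hane
    · exact h0
  rw [hb'0, mul_zero] at e2
  linarith
end

section
/- Let k ≥ 1 and let (D, σ) be an incomplete concept with D ⊆ {1,…,k} and σ : D → {0,1}. If every probability distribution on C = {0,1}^k whose support is contained in the cover of (D, σ) is a product Bernoulli distribution, then the cover of (D, σ) has at most 2 elements, i.e., k − |D| ≤ 1 (at most one free variable). -/
lemma bern_factor_pos {k : ℕ} {μ : Fin k → ℝ} {w : Fin k → Bool}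
    (hμ : ∀ i, 0 ≤ μ i ∧ μ i ≤ 1) (hpos : 0 < bern μ w) (t : Fin k) :
    0 < (if w t then μ t else 1 - μ t) := by
  by_contra hle
  push_neg at hle
  rcases (hμ t) with ⟨h1, h2⟩
  have h0 : (if w t then μ t else 1 - μ t) = 0 := by
    by_cases hw : w t
    · have : μ t = 0 := le_antisymm (by simpa [hw] using hle) h1
      simp [hw, this]
    · have : 1 - μ t = 0 := le_antisymm (by simpa [hw] using hle) (by linarith)
      simp [hw, this]
  have : bern μ w = 0 := by
    unfold bern
    exact Finset.prod_eq_zero (Finset.mem_univ t) h0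
  linarith

/-- Counting step: if every probability distribution supported in the cover of an
incomplete concept `(D, σ)` is a product Bernoulli distribution, then the cover
has at most 2 elements, i.e. there is at most one free variable: `k - |D| ≤ 1`. -/
theorem cover_card_le_two_of_all_prodBern {k : ℕ} (hk : 1 ≤ k)
    (D : Finset (Fin k)) (σ : Fin k → Bool)
    (h : ∀ p : (Fin k → Bool) → ℝ, (∀ w, 0 ≤ p w) → (∑ w, p w = 1) →
      (∀ w, 0 < p w → w ∈ cover D σ) → IsProdBern p) :
    (cover D σ).ncard ≤ 2 ∧ k - D.card ≤ 1 := by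
  have hcard : k - D.card ≤ 1 := by
    by_contra hlt
    push_neg at hlt
    -- Dᶜ has at least 2 elements
    have hcc : Dᶜ.card = k - D.card := by
      simp [Finset.card_compl]
    have h2 : 1 < Dᶜ.card := by omega
    obtain ⟨i, hi, j, hj, hij⟩ := Finset.one_lt_card.mp h2
    have hiD : i ∉ D := Finset.mem_compl.mp hi
    have hjD : j ∉ D := Finset.mem_compl.mp hj
    set w0 : Fin k → Bool := fun t => if t ∈ D then σ t else false with hw0
    set w1 : Fin k → Bool := fun t => if t = i ∨ t = j then true else w0 t with hw1
    have hw0w1 : w0 ≠ w1 := by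
      intro he
      have := congrFun he i
      simp [hw0, hw1, hiD] at this
    set p : (Fin k → Bool) → ℝ :=
      fun w => (if w = w0 then (1:ℝ)/2 else 0) + (if w = w1 then (1:ℝ)/2 else 0) with hp
    have hnn : ∀ w, 0 ≤ p w := by
      intro w
      simp only [hp]
      positivity
    have hsum : ∑ w, p w = 1 := by
      simp only [hp]
      rw [Finset.sum_add_distrib]
      rw [Finset.sum_ite_eq' Finset.univ w0 (fun _ => (1:ℝ)/2)]
      rw [Finset.sum_ite_eq' Finset.univ w1 (fun _ => (1:ℝ)/2)]
      norm_num
    have hsupp : ∀ w, 0 < p w → w ∈ cover D σ := by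
      intro w hw
      have : w = w0 ∨ w = w1 := by
        by_contra hc
        push_neg at hc
        simp [hp, hc.1, hc.2] at hw
      rcases this with rfl | rfl
      · intro t ht; simp [hw0, ht]
      · intro t ht
        have hti : t ≠ i := fun he => hiD (he ▸ ht)
        have htj : t ≠ j := fun he => hjD (he ▸ ht)
        simp [hw1, hw0, hti, htj, ht]
    obtain ⟨μ, hμ, hpb⟩ := h p hnn hsum hsupp
    have hp0 : bern μ w0 = 1/2 := by
      rw [← hpb w0]; simp [hp, hw0w1]
    have hp1 : bern μ w1 = 1/2 := by
      rw [← hpb w1]; simp [hp, hw0w1.symm]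
    have hb0 : 0 < bern μ w0 := by rw [hp0]; norm_num
    have hb1 : 0 < bern μ w1 := by rw [hp1]; norm_num
    -- mixed point: flip only i
    set wm : Fin k → Bool := fun t => if t = i then true else w0 t with hwm
    have hm0 : wm ≠ w0 := by
      intro he
      have := congrFun he i
      simp [hwm, hw0, hiD] at this
    have hm1 : wm ≠ w1 := by
      intro he
      have := congrFun he j
      simp [hwm, hw1, hw0, hij.symm, hjD] at this
    have hpm : bern μ wm = 0 := by
      rw [← hpb wm]; simp [hp, hm0, hm1]
    have : 0 < bern μ wm := by
      unfold bern
      apply Finset.prod_pos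
      intro t _
      by_cases ht : t = i
      · subst ht
        have := bern_factor_pos hμ hb1 t
        simpa [hwm, hw1] using this
      · have := bern_factor_pos hμ hb0 t
        simpa [hwm, ht] using this
    linarith
  refine ⟨?_, hcard⟩
  -- cover ⊆ {A, B}
  set A : Fin k → Bool := fun t => if t ∈ D then σ t else false with hA
  set B : Fin k → Bool := fun t => if t ∈ D then σ t else true with hB
  have hcc : Dᶜ.card ≤ 1 := by
    simp [Finset.card_compl]; omega
  have hsub : cover D σ ⊆ {A, B} := by
    intro w hw
    by_cases hall : ∀ t, t ∉ D → w t = false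
    · left
      funext t
      by_cases ht : t ∈ D
      · simp [hA, ht, hw t ht]
      · simp [hA, ht, hall t ht]
    · right
      push_neg at hall
      obtain ⟨t0, ht0D, ht0⟩ := hall
      have ht0' : w t0 = true := by
        cases hwt : w t0
        · exact absurd hwt ht0
        · rfl
      funext t
      by_cases ht : t ∈ D
      · simp [hB, ht, hw t ht]
      · have : t = t0 := by
          by_contra hne
          have hsub2 : {t, t0} ⊆ Dᶜ := by
            intro x hx
            simp only [Finset.mem_insert, Finset.mem_singleton] at hx
            rcases hx with rfl | rfl <;> simp [Finset.mem_compl, ht, ht0D]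
          have := Finset.card_le_card hsub2
          rw [Finset.card_insert_of_notMem (by simp [hne])] at this
          simp at this
          omega
        subst this
        simp [hB, ht, ht0']
  calc (cover D σ).ncard ≤ ({A, B} : Set (Fin k → Bool)).ncard :=
        Set.ncard_le_ncard hsub (Set.toFinite _)
    _ ≤ 2 := by
        by_cases hAB : A = B
        · simp [hAB]
        · rw [Set.ncard_pair hAB]
end
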